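/- For any partition μ with at most n parts and any nonnegative integer r, h_r(x_1,...,x_n) · s_μ(x_1,...,x_n) = Σ_γ s_γ(x_1,...,x_n), where the sum is over all partitions γ ⊇ μ such that γ/μ is a horizontal strip with r boxes (at most one box in each column). -/

import Mathlib

open scoped BigOperators

noncomputable section

/-- An integer partition: a weakly decreasing, eventually zero sequence of naturals. -/
structure IntPartition where
  part : ℕ → ℕ
  antitone : ∀ i j, i ≤ j → part j ≤ part i
  finite : ∃ N, ∀ i, N ≤ i → part i = 0

namespace IntPartition

instance : LE IntPartition := ⟨fun μ ν => ∀ i, μ.part i ≤ ν.part i⟩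

/-- The number of nonzero parts of a partition. -/
def len (μ : IntPartition) : ℕ :=
  Nat.find (p := fun N => μ.part N = 0)
    (by obtain ⟨N, hN⟩ := μ.finite; exact ⟨N, hN N le_rfl⟩)

/-- The size `|μ|` of a partition. -/
def size (μ : IntPartition) : ℕ := ∑ i ∈ Finset.range μ.len, μ.part i

/-- The number of boxes of the skew shape `ν/μ`. -/
def skewSize (ν μ : IntPartition) : ℕ := ν.size - μ.size

/-- One less than the number of nonempty rows of `ν/μ`. -/
def height (μ ν : IntPartition) : ℕ :=
  (((Finset.range ν.len).filter (fun i => μ.part i < ν.part i)).card) - 1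

/-- The set of boxes of the skew diagram `ν/μ` (rows and columns indexed from 0). -/
def cells (μ ν : IntPartition) : Set (ℕ × ℕ) :=
  {c | μ.part c.1 ≤ c.2 ∧ c.2 < ν.part c.1}

/-- Two boxes are adjacent if they share a common side. -/
def Adj (a b : ℕ × ℕ) : Prop :=
  (a.1 = b.1 ∧ (a.2 + 1 = b.2 ∨ b.2 + 1 = a.2)) ∨
  (a.2 = b.2 ∧ (a.1 + 1 = b.1 ∨ b.1 + 1 = a.1))

/-- A set of boxes is connected if any two of its boxes are joined by a path of
adjacent boxes within the set. -/
def ConnectedIn (S : Set (ℕ × ℕ)) : Prop :=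
  ∀ a ∈ S, ∀ b ∈ S,
    Relation.ReflTransGen (fun u v => u ∈ S ∧ v ∈ S ∧ Adj u v) a b

/-- `ν/μ` is a border strip with `r` boxes: connected and with no 2×2 block. -/
def IsBorderStrip (μ ν : IntPartition) (r : ℕ) : Prop :=
  μ ≤ ν ∧ skewSize ν μ = r ∧ ConnectedIn (cells μ ν) ∧
    ∀ i j : ℕ, ¬ ((i, j) ∈ cells μ ν ∧ (i + 1, j) ∈ cells μ ν ∧
      (i, j + 1) ∈ cells μ ν ∧ (i + 1, j + 1) ∈ cells μ ν)

/-- `ν/μ` is a vertical strip with `r` boxes (at most one box per row). -/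
def IsVerticalStrip (μ ν : IntPartition) (r : ℕ) : Prop :=
  μ ≤ ν ∧ skewSize ν μ = r ∧ ∀ i, ν.part i ≤ μ.part i + 1

/-- `ν/μ` is a horizontal strip with `r` boxes (at most one box per column). -/
def IsHorizontalStrip (μ ν : IntPartition) (r : ℕ) : Prop :=
  μ ≤ ν ∧ skewSize ν μ = r ∧ ∀ i, ν.part (i + 1) ≤ μ.part i

/-- The conjugate partition. -/
def conj (μ : IntPartition) : IntPartition where
  part j := ((Finset.range μ.len).filter (fun i => j < μ.part i)).card
  antitone := by
    intro i j hij
    apply Finset.card_le_card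
    intro a ha
    simp only [Finset.mem_filter] at ha ⊢
    exact ⟨ha.1, lt_of_le_of_lt hij ha.2⟩
  finite := ⟨μ.part 0, by
    intro j hj
    simp only [Finset.card_eq_zero, Finset.filter_eq_empty_iff]
    intro a _
    have := μ.antitone 0 a (Nat.zero_le a)
    omega⟩

end IntPartition
/-- The field of rational functions in `n` variables over `ℚ`. -/
abbrev K (n : ℕ) := FractionRing (MvPolynomial (Fin n) ℚ)

/-- The variables `x_i`. -/
def X {n : ℕ} (i : Fin n) : K n :=
  algebraMap (MvPolynomial (Fin n) ℚ) (K n) (MvPolynomial.X i)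

/-- The power sum polynomial `p_r(x_1,…,x_n)`. -/
def psum (n r : ℕ) : K n := ∑ i : Fin n, X i ^ r

/-- The elementary symmetric polynomial `e_r(x_1,…,x_n)`. -/
def esymm (n r : ℕ) : K n :=
  ∑ s ∈ Finset.powersetCard r (Finset.univ : Finset (Fin n)), ∏ i ∈ s, X i

/-- The complete homogeneous symmetric polynomial `h_r(x_1,…,x_n)`. -/
def hsymm (n r : ℕ) : K n :=
  ∑ c : Sym (Fin n) r, (c.1.map (fun i => X i)).prod

/-- The Schur polynomial `s_μ(x_1,…,x_n)`, via the bialternant formula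
(zero when `μ` has more than `n` parts). -/
def schur (n : ℕ) (μ : IntPartition) : K n :=
  if μ.len ≤ n then
    (Matrix.det (Matrix.of fun i j : Fin n => X i ^ (μ.part j + (n - 1 - (j : ℕ))))) /
      (Matrix.det (Matrix.of fun i j : Fin n => X i ^ (n - 1 - (j : ℕ))))
  else 0

/-!
Write `s_μ = a_{μ+δ} / a_δ` with the alternants `a_c = det (x_i ^ c_j)` and `δ = (n-1, …, 1, 0)`.
For `β = μ + δ`, expanding `h_r a_β` gives `∑_{|α| = r} a_{β+α}`. The terms with a repeated
exponent vanish, and every other one is `± a_l` with `l` strictly decreasing, so the coefficient of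
`a_l` is the signed count of the permutations `σ` with `β ≤ l ∘ σ`, namely `det [β_j ≤ l_k]`. This
0/1 matrix is unitriangular when `l` interlaces `β`, i.e. `l₀ ≥ β₀ > l₁ ≥ β₁ > ⋯`, and singular
otherwise; and `γ + δ` interlaces `μ + δ` exactly when `γ/μ` is a horizontal strip.
-/

section

open Finset Matrix Equiv

variable {n : ℕ}

def alternant (n : ℕ) (c : Fin n → ℕ) : K n := det (of fun i j : Fin n => X i ^ c j)

theorem alternant_eq_sum (c : Fin n → ℕ) :
    alternant n c = ∑ σ : Perm (Fin n), ((Perm.sign σ : ℤ) : K n) * ∏ j, X (σ j) ^ c j := by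
  simp [alternant, det_apply, Units.smul_def]

theorem alternant_comp_perm (c : Fin n → ℕ) (σ : Perm (Fin n)) :
    alternant n (c ∘ σ) = (Perm.sign σ : ℤ) * alternant n c := by
  simpa [alternant, submatrix] using det_permute' σ (of fun i j : Fin n => X i ^ c j)

theorem alternant_eq_zero_of_not_injective {c : Fin n → ℕ} (h : ¬ Function.Injective c) :
    alternant n c = 0 := by
  obtain ⟨j, k, hjk, hne⟩ : ∃ j k, c j = c k ∧ j ≠ k := by
    simpa [Function.Injective] using h
  exact det_zero_of_column_eq hne fun i => by simp [hjk]

theorem comp_perm_mem_antidiagonalTuple {N : ℕ} {c : Fin n → ℕ} (σ : Perm (Fin n)) :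
    c ∘ σ ∈ Nat.antidiagonalTuple n N ↔ c ∈ Nat.antidiagonalTuple n N := by
  simp only [Nat.mem_antidiagonalTuple, Function.comp_apply, Equiv.sum_comp σ c]

theorem hsymm_eq_sum_prod (r : ℕ) (σ : Perm (Fin n)) :
    hsymm n r = ∑ α ∈ Nat.antidiagonalTuple n r, ∏ j, X (σ j) ^ α j := by
  have hcount : hsymm n r = ∑ α ∈ Nat.antidiagonalTuple n r, ∏ i, X i ^ α i := by
    let e : Sym (Fin n) r ≃ Nat.antidiagonalTuple n r :=
      (Sym.equivNatSumOfFintype (Fin n) r).trans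
        (Equiv.subtypeEquivRight fun α => Nat.mem_antidiagonalTuple.symm)
    rw [hsymm, ← Finset.sum_coe_sort (Nat.antidiagonalTuple n r)]
    refine Fintype.sum_equiv e _ (fun α => ∏ i, X i ^ (α : Fin n → ℕ) i) fun c => ?_
    rw [Finset.prod_multiset_map_count]
    refine Finset.prod_subset (subset_univ _) fun i _ hi => ?_
    rw [Multiset.count_eq_zero_of_notMem (by simpa using hi), pow_zero]
  rw [hcount]
  refine Finset.sum_nbij' (· ∘ σ) (· ∘ σ.symm) (fun α hα => ?_) (fun α hα => ?_)
    (fun α _ => ?_) (fun α _ => ?_) (fun α _ => ?_)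
  · simpa [comp_perm_mem_antidiagonalTuple] using hα
  · simpa [comp_perm_mem_antidiagonalTuple] using hα
  · ext; simp
  · ext; simp
  · exact (Equiv.prod_comp σ fun i => X i ^ α i).symm

theorem hsymm_mul_alternant (r : ℕ) (β : Fin n → ℕ) :
    hsymm n r * alternant n β = ∑ α ∈ Nat.antidiagonalTuple n r, alternant n (β + α) := by
  simp only [alternant_eq_sum, Finset.mul_sum, Pi.add_apply, pow_add, Finset.prod_mul_distrib]
  rw [Finset.sum_comm]
  refine Finset.sum_congr rfl fun σ _ => ?_
  rw [hsymm_eq_sum_prod r σ, Finset.sum_mul]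
  exact Finset.sum_congr rfl fun α _ => by ring

theorem Equiv.Perm.eq_one_of_strictAnti_comp {ι α : Type*} [LinearOrder ι] [Finite ι]
    [LinearOrder α] {l : ι → α} {π : Perm ι} (hl : StrictAnti l) (hlπ : StrictAnti (l ∘ π)) :
    π = 1 := by
  have hπ : StrictMono π := fun a b hab => hl.lt_iff_gt.mp (hlπ hab)
  exact Equiv.ext fun _ => hπ.apply_eq

theorem exists_strictAnti_comp_perm_eq {α : Type*} [LinearOrder α] {c : Fin n → α}
    (hc : Function.Injective c) :
    ∃ (l : Fin n → α) (σ : Perm (Fin n)), StrictAnti l ∧ l ∘ σ = c := by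
  have hsort : StrictMono (c ∘ Tuple.sort c) :=
    (Tuple.monotone_sort c).strictMono_of_injective (hc.comp (Tuple.sort c).injective)
  refine ⟨c ∘ Tuple.sort c ∘ Fin.revPerm, Fin.revPerm * (Tuple.sort c)⁻¹, ?_, ?_⟩
  · exact hsort.comp_strictAnti fun a b hab => Fin.rev_lt_rev.mpr hab
  · ext j; simp

theorem Antitone.le_of_le_comp_perm {α : Type*} [Preorder α] {β l : Fin n → α} {σ : Perm (Fin n)}
    (hβ : Antitone β) (hl : Antitone l) (h : β ≤ l ∘ σ) : β ≤ l := by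
  intro j
  -- `σ` cannot map the `j + 1` indices `i ≤ j` into the `j` indices `< j`.
  obtain ⟨i, hij, hji⟩ : ∃ i ≤ j, j ≤ σ i := by
    by_contra! hlt
    have := Finset.card_le_card_of_injOn σ (s := Iic j) (t := Iio j)
      (fun i hi => mem_Iio.mpr (hlt i (mem_Iic.mp hi))) σ.injective.injOn
    simp at this
  exact (hβ hij).trans ((h i).trans (hl hji))

section Cancellation

open scoped Classical

theorem sum_filter_injective_eq_sum_strictAnti {α M : Type*} [LinearOrder α] [AddCommMonoid M]
    (s : Finset (Fin n → α)) (hs : ∀ (c : Fin n → α) (σ : Perm (Fin n)), c ∘ σ ∈ s ↔ c ∈ s)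
    (g : (Fin n → α) → M) :
    ∑ c ∈ s with Function.Injective c, g c =
      ∑ l ∈ s with StrictAnti l, ∑ σ : Perm (Fin n), g (l ∘ σ) := by
  rw [← Finset.sum_finset_product' (s.filter StrictAnti ×ˢ univ) _ _ (by simp)]
  symm
  refine Finset.sum_bij (fun p _ => p.1 ∘ p.2) ?_ ?_ ?_ (fun _ _ => rfl)
  · rintro ⟨l, σ⟩ hp
    simp only [mem_product, mem_filter, mem_univ, and_true] at hp
    exact mem_filter.mpr ⟨(hs l σ).mpr hp.1, hp.2.injective.comp σ.injective⟩
  · rintro ⟨l, σ⟩ hp ⟨l', σ'⟩ hp' heq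
    simp only [mem_product, mem_filter, mem_univ, and_true] at hp hp'
    have hπ : σ * σ'⁻¹ = 1 := by
      refine Perm.eq_one_of_strictAnti_comp hp.2 ?_
      have : l ∘ (σ * σ'⁻¹) = l' := by
        ext j; simpa using congrFun heq (σ'⁻¹ j)
      exact this ▸ hp'.2
    obtain rfl : σ = σ' := mul_inv_eq_one.mp hπ
    obtain rfl : l = l' := by
      ext j; simpa using congrFun heq (σ⁻¹ j)
    rfl
  · intro c hc
    obtain ⟨hcs, hinj⟩ := mem_filter.mp hc
    obtain ⟨l, σ, hl, rfl⟩ := exists_strictAnti_comp_perm_eq hinj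
    exact ⟨(l, σ), by simpa [hl] using (hs l σ).mp hcs, rfl⟩

def Interlaces (β l : Fin n → ℕ) : Prop := β ≤ l ∧ ∀ j k, j < k → l k < β j

theorem Interlaces.strictAnti {β l : Fin n → ℕ} (h : Interlaces β l) : StrictAnti l :=
  fun j k hjk => (h.2 j k hjk).trans_le (h.1 j)

def leMatrix (β l : Fin n → ℕ) : Matrix (Fin n) (Fin n) ℤ :=
  of fun k j => if β j ≤ l k then 1 else 0

theorem det_leMatrix (β l : Fin n → ℕ) :
    det (leMatrix β l) =
      ∑ σ ∈ univ.filter fun σ : Perm (Fin n) => β ≤ l ∘ σ, (Perm.sign σ : ℤ) := by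
  rw [det_apply, sum_filter]
  refine sum_congr rfl fun σ _ => ?_
  simp only [leMatrix, of_apply, prod_boole, Units.smul_def, zsmul_eq_mul, mul_ite, mul_one,
    mul_zero, Pi.le_def, Function.comp_apply, mem_univ, true_implies, Int.cast_id]

theorem det_leMatrix_of_interlaces {β l : Fin n → ℕ} (h : Interlaces β l) :
    det (leMatrix β l) = 1 := by
  rw [det_of_isUpperTriangular fun k j (hjk : j < k) => by simp [leMatrix, h.2 j k hjk]]
  exact prod_eq_one fun k _ => by simp [leMatrix, h.1 k]

theorem det_leMatrix_eq_zero {β l : Fin n → ℕ} (hβ : Antitone β) (hl : Antitone l)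
    (h : ¬ ∀ j k, j < k → l k < β j) : det (leMatrix β l) = 0 := by
  push Not at h
  obtain ⟨j, ⟨k, hjk, hle⟩, hmin⟩ := WellFounded.has_min wellFounded_lt _ h
  -- With `j` minimal, rows `j` and `k` are equal.
  refine det_zero_of_row_eq (ne_of_lt hjk) (funext fun i => ?_)
  simp only [leMatrix, of_apply]
  congr 1
  refine propext ⟨fun hi => ?_, fun hi => hi.trans (hl hjk.le)⟩
  rcases lt_or_ge i j with hij | hji
  · exact absurd hij (hmin i ⟨j, hij, hi⟩)
  · exact (hβ hji).trans hle

theorem det_leMatrix_eq {β l : Fin n → ℕ} (hβ : Antitone β) (hl : Antitone l) :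
    det (leMatrix β l) = if Interlaces β l then 1 else 0 := by
  split_ifs with h
  · exact det_leMatrix_of_interlaces h
  by_cases hle : β ≤ l
  · exact det_leMatrix_eq_zero hβ hl fun h' => h ⟨hle, h'⟩
  · rw [det_leMatrix, sum_eq_zero]
    intro σ hσ
    exact absurd (hβ.le_of_le_comp_perm hl (mem_filter.mp hσ).2) hle

theorem sum_antidiagonalTuple_add {M : Type*} [AddCommMonoid M] (β : Fin n → ℕ) (r : ℕ)
    (f : (Fin n → ℕ) → M) :
    ∑ α ∈ Nat.antidiagonalTuple n r, f (β + α) =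
      ∑ c ∈ Nat.antidiagonalTuple n (∑ j, β j + r) with β ≤ c, f c := by
  refine sum_nbij' (β + ·) (· - β) (fun α hα => ?_) (fun c hc => ?_)
    (fun α _ => add_tsub_cancel_left β α) (fun c hc => add_tsub_cancel_of_le (mem_filter.mp hc).2)
    (fun _ _ => rfl)
  · rw [Nat.mem_antidiagonalTuple] at hα
    simp [Nat.mem_antidiagonalTuple, sum_add_distrib, hα]
  · obtain ⟨hc, hβc⟩ := mem_filter.mp hc
    rw [Nat.mem_antidiagonalTuple] at hc ⊢
    simp only [Pi.sub_apply]
    rw [sum_tsub_distrib _ fun j _ => hβc j, hc, add_tsub_cancel_left]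

theorem sum_alternant_add_eq_sum_interlaces {β : Fin n → ℕ} (hβ : StrictAnti β) (r : ℕ) :
    ∑ α ∈ Nat.antidiagonalTuple n r, alternant n (β + α) =
      ∑ l ∈ Nat.antidiagonalTuple n (∑ j, β j + r) with Interlaces β l, alternant n l := by
  set N := ∑ j, β j + r
  have hcoeff : ∀ l : Fin n → ℕ, StrictAnti l →
      ∑ σ : Perm (Fin n), (if β ≤ l ∘ σ then alternant n (l ∘ σ) else 0) =
        if Interlaces β l then alternant n l else 0 := by
    intro l hl
    simp_rw [alternant_comp_perm]
    rw [← sum_filter, ← sum_mul, ← Int.cast_sum, ← det_leMatrix,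
      det_leMatrix_eq hβ.antitone hl.antitone]
    split_ifs <;> simp
  calc ∑ α ∈ Nat.antidiagonalTuple n r, alternant n (β + α)
      = ∑ c ∈ Nat.antidiagonalTuple n N with β ≤ c, alternant n c :=
        sum_antidiagonalTuple_add β r _
    _ = ∑ c ∈ Nat.antidiagonalTuple n N with Function.Injective c,
          if β ≤ c then alternant n c else 0 := by
        rw [sum_filter, sum_filter_of_ne]
        intro c _ hc
        by_contra hinj
        simp [alternant_eq_zero_of_not_injective hinj] at hc
    _ = ∑ l ∈ Nat.antidiagonalTuple n N with StrictAnti l,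
          ∑ σ : Perm (Fin n), if β ≤ l ∘ σ then alternant n (l ∘ σ) else 0 :=
        sum_filter_injective_eq_sum_strictAnti _ (fun _ σ => comp_perm_mem_antidiagonalTuple σ) _
    _ = ∑ l ∈ Nat.antidiagonalTuple n N with StrictAnti l,
          if Interlaces β l then alternant n l else 0 :=
        sum_congr rfl fun l hl => hcoeff l (mem_filter.mp hl).2
    _ = ∑ l ∈ Nat.antidiagonalTuple n N with Interlaces β l, alternant n l := by
        rw [← sum_filter, filter_filter]
        exact sum_congr (filter_congr fun l _ => ⟨And.right, fun h => ⟨h.strictAnti, h⟩⟩)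
          fun _ _ => rfl

end Cancellation

def staircase (n : ℕ) : Fin n → ℕ := fun j => n - 1 - j

theorem staircase_le_of_strictAnti {l : Fin n → ℕ} (hl : StrictAnti l) (j : Fin n) :
    staircase n j ≤ l j := by
  suffices h : ∀ m (j : Fin n), (j : ℕ) + m < n → m ≤ l j from h _ j (by simp [staircase]; omega)
  intro m
  induction m with
  | zero => simp
  | succ m ih =>
    intro j hj
    exact (ih ⟨j + 1, by omega⟩ (by simp; omega)).trans_lt (hl (Fin.mk_lt_mk.mpr (by omega)))

namespace IntPartition

@[ext] theorem ext {μ ν : IntPartition} (h : ∀ i, μ.part i = ν.part i) : μ = ν := by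
  cases μ; cases ν; congr; exact funext h

theorem part_eq_zero_of_len_le {μ : IntPartition} {i : ℕ} (h : μ.len ≤ i) : μ.part i = 0 :=
  Nat.le_zero.mp ((μ.antitone _ _ h).trans_eq (Nat.find_spec (p := fun N => μ.part N = 0) _))

theorem len_le_of_part_eq_zero {μ : IntPartition} {N : ℕ} (h : μ.part N = 0) : μ.len ≤ N :=
  Nat.find_min' _ h

theorem size_eq_sum_range {μ : IntPartition} (h : μ.len ≤ n) :
    μ.size = ∑ i ∈ range n, μ.part i :=
  sum_subset (range_subset_range.mpr h) fun _ _ hi =>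
    part_eq_zero_of_len_le (by simpa using hi)

def shiftedParts (n : ℕ) (μ : IntPartition) : Fin n → ℕ := fun j => μ.part j + staircase n j

theorem strictAnti_shiftedParts (μ : IntPartition) : StrictAnti (μ.shiftedParts n) := by
  intro j k hjk
  have := μ.antitone j k hjk.le
  have := k.isLt
  simp only [shiftedParts, staircase]
  omega

theorem sum_shiftedParts {μ : IntPartition} (h : μ.len ≤ n) :
    ∑ j, μ.shiftedParts n j = μ.size + ∑ j, staircase n j := by
  rw [size_eq_sum_range h, ← Fin.sum_univ_eq_sum_range, ← sum_add_distrib]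
  rfl

theorem injOn_shiftedParts : Set.InjOn (shiftedParts n) {μ | μ.len ≤ n} := by
  intro μ hμ ν hν h
  ext i
  by_cases hi : i < n
  · simpa [shiftedParts] using congrFun h ⟨i, hi⟩
  · rw [part_eq_zero_of_len_le (hμ.trans (not_lt.mp hi)),
      part_eq_zero_of_len_le (hν.trans (not_lt.mp hi))]

def ofStrictAnti (l : Fin n → ℕ) (hl : StrictAnti l) : IntPartition where
  part i := if h : i < n then l ⟨i, h⟩ - staircase n ⟨i, h⟩ else 0
  antitone := by
    refine fun i j hij => antitone_nat_of_succ_le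
      (f := fun i => if h : i < n then l ⟨i, h⟩ - staircase n ⟨i, h⟩ else 0) (fun i => ?_) hij
    by_cases hi : i + 1 < n
    · have := hl (Fin.mk_lt_mk.mpr (Nat.lt_succ_self i) : (⟨i, by omega⟩ : Fin n) < ⟨i + 1, hi⟩)
      simp only [dif_pos hi, dif_pos (show i < n by omega), staircase]
      omega
    · simp [dif_neg hi]
  finite := ⟨n, fun _ hi => dif_neg (not_lt.mpr hi)⟩

theorem len_ofStrictAnti_le {l : Fin n → ℕ} (hl : StrictAnti l) : (ofStrictAnti l hl).len ≤ n :=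
  len_le_of_part_eq_zero (dif_neg (lt_irrefl n))

theorem shiftedParts_ofStrictAnti {l : Fin n → ℕ} (hl : StrictAnti l) :
    (ofStrictAnti l hl).shiftedParts n = l := by
  ext j
  have := staircase_le_of_strictAnti hl j
  simp only [shiftedParts, ofStrictAnti, dif_pos j.isLt, Fin.eta]
  omega

theorem le_iff_shiftedParts_le {μ γ : IntPartition} (hμ : μ.len ≤ n) :
    μ ≤ γ ↔ μ.shiftedParts n ≤ γ.shiftedParts n := by
  refine ⟨fun h j => Nat.add_le_add_right (h j) _, fun h i => ?_⟩
  by_cases hi : i < n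
  · simpa [shiftedParts] using h ⟨i, hi⟩
  · simp [part_eq_zero_of_len_le (hμ.trans (not_lt.mp hi))]

theorem part_succ_le_iff {μ γ : IntPartition} (hγ : γ.len ≤ n) :
    (∀ i, γ.part (i + 1) ≤ μ.part i) ↔
      ∀ j k : Fin n, j < k → γ.shiftedParts n k < μ.shiftedParts n j := by
  simp only [shiftedParts, staircase]
  constructor
  · intro h j k hjk
    have := γ.antitone (j + 1) k hjk
    have := h j
    have := k.isLt
    omega
  · intro h i
    by_cases hi : i + 1 < n
    · have := h ⟨i, by omega⟩ ⟨i + 1, hi⟩ (Fin.mk_lt_mk.mpr (Nat.lt_succ_self i))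
      simp only at this
      omega
    · simp [part_eq_zero_of_len_le (hγ.trans (not_lt.mp hi))]

theorem size_le_size {μ γ : IntPartition} (hμ : μ.len ≤ n) (hγ : γ.len ≤ n) (h : μ ≤ γ) :
    μ.size ≤ γ.size := by
  rw [size_eq_sum_range hμ, size_eq_sum_range hγ]
  exact sum_le_sum fun i _ => h i

theorem isHorizontalStrip_iff {μ γ : IntPartition} (hμ : μ.len ≤ n) (hγ : γ.len ≤ n) {r : ℕ} :
    IsHorizontalStrip μ γ r ↔ Interlaces (μ.shiftedParts n) (γ.shiftedParts n) ∧
      ∑ j, γ.shiftedParts n j = ∑ j, μ.shiftedParts n j + r := by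
  rw [IsHorizontalStrip, Interlaces, ← le_iff_shiftedParts_le hμ, ← part_succ_le_iff hγ,
    sum_shiftedParts hμ, sum_shiftedParts hγ, skewSize]
  constructor
  · rintro ⟨hle, hsize, hstrip⟩
    have := size_le_size hμ hγ hle
    exact ⟨⟨hle, hstrip⟩, by omega⟩
  · rintro ⟨⟨hle, hstrip⟩, hsum⟩
    exact ⟨hle, by omega, hstrip⟩

open scoped Classical in
theorem bijOn_shiftedParts {μ : IntPartition} (hμ : μ.len ≤ n) (r : ℕ) :
    Set.BijOn (shiftedParts n) {γ | IsHorizontalStrip μ γ r ∧ γ.len ≤ n}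
      ↑((Nat.antidiagonalTuple n (∑ j, μ.shiftedParts n j + r)).filter
        (Interlaces (μ.shiftedParts n))) := by
  refine ⟨fun γ ⟨hγ, hlen⟩ => ?_, injOn_shiftedParts.mono fun _ h => h.2, fun l hl => ?_⟩
  · obtain ⟨hint, hsum⟩ := (isHorizontalStrip_iff hμ hlen).mp hγ
    simpa [Nat.mem_antidiagonalTuple, hsum] using hint
  · obtain ⟨hsum, hint⟩ : l ∈ Nat.antidiagonalTuple n _ ∧ Interlaces _ l := by simpa using hl
    have hγ := len_ofStrictAnti_le hint.strictAnti
    refine ⟨ofStrictAnti l hint.strictAnti,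
      ⟨(isHorizontalStrip_iff hμ hγ).mpr ?_, hγ⟩, shiftedParts_ofStrictAnti _⟩
    rw [shiftedParts_ofStrictAnti]
    exact ⟨hint, Nat.mem_antidiagonalTuple.mp hsum⟩

end IntPartition

theorem schur_eq_alternant_div {μ : IntPartition} (h : μ.len ≤ n) :
    schur n μ = alternant n (μ.shiftedParts n) / alternant n (staircase n) :=
  if_pos h

end

/-- Pieri's rule: `h_r · s_μ = Σ_{γ/μ ∈ HS(r)} s_γ`. -/
theorem pieri_hsymm (n r : ℕ) (μ : IntPartition) (hμ : μ.len ≤ n) :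
    hsymm n r * schur n μ =
      ∑ᶠ γ ∈ {γ | IntPartition.IsHorizontalStrip μ γ r}, schur n γ := by
  classical
  calc hsymm n r * schur n μ
      = ∑ l ∈ Finset.Nat.antidiagonalTuple n (∑ j, μ.shiftedParts n j + r)
          with Interlaces (μ.shiftedParts n) l, alternant n l / alternant n (staircase n) := by
        rw [schur_eq_alternant_div hμ, ← mul_div_assoc, hsymm_mul_alternant,
          sum_alternant_add_eq_sum_interlaces μ.strictAnti_shiftedParts, Finset.sum_div]
    _ = ∑ᶠ γ ∈ {γ | μ.IsHorizontalStrip γ r ∧ γ.len ≤ n}, schur n γ := by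
        rw [← finsum_mem_coe_finset]
        exact (finsum_mem_eq_of_bijOn _ (IntPartition.bijOn_shiftedParts hμ r)
          fun γ hγ => schur_eq_alternant_div hγ.2).symm
    _ = ∑ᶠ γ ∈ {γ | IntPartition.IsHorizontalStrip μ γ r}, schur n γ := by
        refine finsum_mem_inter_support_eq' _ _ _ fun γ hγ => ?_
        have hlen : γ.len ≤ n := by_contra fun h => hγ (if_neg h)
        simp [hlen]
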